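/- arXiv:2201.09287 — 5 statements merged into one kernel-verified Lean document; each statement's English description precedes it below -/
import Mathlib

section
/- If k₁ and k₂ are distinct squarefree positive integers, then k₁·τ(k₁) ≠ k₂·τ(k₂), where τ is the number-of-divisors function. -/
/-!
Since `τ k = 2 ^ ω k` for squarefree `k`, an equality `k₁ 2^ω(k₁) = k₂ 2^ω(k₂)` with
`ω k₁ ≤ ω k₂` forces `k₁ = 2^d k₂` where `d = ω k₂ - ω k₁`. Squarefreeness of `k₁` gives
`d ≤ 1`, and `d = 1` is impossible because then `ω k₁ = ω k₂ + 1`.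
-/

open Finset ArithmeticFunction
open scoped ArithmeticFunction.omega

theorem ArithmeticFunction.cardDistinctFactors_eq_card_primeFactors (n : ℕ) :
    ω n = #n.primeFactors :=
  (List.card_toFinset _).symm

theorem ArithmeticFunction.cardDistinctFactors_mul_prime {n p : ℕ} (hp : p.Prime)
    (h : Squarefree (n * p)) : ω (n * p) = ω n + 1 := by
  rw [cardDistinctFactors_mul (Nat.coprime_of_squarefree_mul h), cardDistinctFactors_apply_prime hp]

theorem Nat.card_divisors_of_squarefree {n : ℕ} (hn : Squarefree n) : #n.divisors = 2 ^ ω n := by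
  rw [Nat.card_divisors hn.ne_zero, cardDistinctFactors_eq_card_primeFactors, ← prod_const]
  refine prod_congr rfl fun p hp => ?_
  rw [Nat.factorization_eq_one_of_squarefree hn (Nat.prime_of_mem_primeFactors hp)
    (Nat.dvd_of_mem_primeFactors hp)]

theorem squarefree_mul_tau_ne (k₁ k₂ : ℕ) (h₁ : Squarefree k₁) (h₂ : Squarefree k₂)
    (hne : k₁ ≠ k₂) :
    k₁ * (Nat.divisors k₁).card ≠ k₂ * (Nat.divisors k₂).card := by
  wlog hle : ω k₁ ≤ ω k₂ generalizing k₁ k₂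
  · exact (this k₂ k₁ h₂ h₁ hne.symm (le_of_not_ge hle)).symm
  intro h
  obtain ⟨d, hd⟩ := Nat.exists_eq_add_of_le hle
  have hk : k₁ = k₂ * 2 ^ d := by
    rw [Nat.card_divisors_of_squarefree h₁, Nat.card_divisors_of_squarefree h₂, hd, pow_add,
      mul_comm (2 ^ ω k₁), ← mul_assoc] at h
    exact Nat.eq_of_mul_eq_mul_right (Nat.two_pow_pos _) h
  subst hk
  rcases h₁.of_mul_right.eq_zero_or_one_of_pow_of_not_isUnit Nat.prime_two.not_isUnit
    with rfl | rfl
  · simp at hne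
  · rw [pow_one] at h₁ hd
    rw [cardDistinctFactors_mul_prime Nat.prime_two h₁] at hd
    omega
end

section
/- There exists a constant C > 0 such that ∑_{n ≤ x} n/φ(n) ≤ C·x for all x ≥ 1, where φ is Euler's totient function. -/
open Finset

/-- Basel-type bound: partial sums of 1/m² are at most 2. -/
lemma basel_bound (M : ℕ) : ∑ m ∈ Ioc 0 M, (1 : ℝ) / (m : ℝ) ^ 2 ≤ 2 - 2 / (M + 1) := by
  induction M with
  | zero => simp
  | succ M ih =>
    rw [Finset.sum_Ioc_succ_top (Nat.zero_le _)]
    have h1 : (0 : ℝ) < M + 1 := by positivity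
    have h2 : (0 : ℝ) < M + 2 := by positivity
    have key : (1 : ℝ) / ((M : ℝ) + 1) ^ 2 ≤ 2 / (M + 1) - 2 / (M + 2) := by
      rw [div_sub_div _ _ (ne_of_gt h1) (ne_of_gt h2), div_le_div_iff₀ (by positivity) (by positivity)]
      ring_nf
      nlinarith
    push_cast
    rw [show ((M:ℝ)+1+1) = (M:ℝ)+2 from by ring]
    linarith

lemma basel_bound' (M : ℕ) : ∑ m ∈ Ioc 0 M, (1 : ℝ) / (m : ℝ) ^ 2 ≤ 2 := by
  have := basel_bound M
  have : (0:ℝ) < 2 / (M + 1) := by positivity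
  linarith [basel_bound M]

/-- n/φ(n) ≤ ∑_{d ∣ n} 1/φ(d). -/
lemma div_totient_le_sum (n : ℕ) :
    (n : ℝ) / (Nat.totient n : ℝ) ≤ ∑ d ∈ n.divisors, 1 / (Nat.totient d : ℝ) := by
  rcases Nat.eq_zero_or_pos n with rfl | hn
  · simp
  have hφn : 0 < Nat.totient n := Nat.totient_pos.mpr hn
  have hsum : (n : ℝ) = ∑ d ∈ n.divisors, (Nat.totient d : ℝ) := by
    rw [← Nat.cast_sum]
    exact_mod_cast (Nat.sum_totient n).symm
  rw [hsum, Finset.sum_div]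
  calc ∑ d ∈ n.divisors, (Nat.totient d : ℝ) / (Nat.totient n : ℝ)
      ≤ ∑ d ∈ n.divisors, 1 / (Nat.totient (n / d) : ℝ) := by
        apply Finset.sum_le_sum
        intro d hd
        rw [Nat.mem_divisors] at hd
        have hmul : Nat.totient d * Nat.totient (n / d) ≤ Nat.totient n := by
          have := Nat.totient_super_multiplicative d (n / d)
          rwa [Nat.mul_div_cancel' hd.1] at this
        have hφd : 0 < Nat.totient (n / d) :=
          Nat.totient_pos.mpr (Nat.div_pos (Nat.le_of_dvd hn hd.1) (Nat.pos_of_dvd_of_pos hd.1 hn))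
        rw [div_le_div_iff₀ (by exact_mod_cast hφn) (by exact_mod_cast hφd)]
        calc (Nat.totient d : ℝ) * (Nat.totient (n / d) : ℝ)
            = ((Nat.totient d * Nat.totient (n / d) : ℕ) : ℝ) := by push_cast; ring
          _ ≤ (Nat.totient n : ℝ) := by exact_mod_cast hmul
          _ = 1 * (Nat.totient n : ℝ) := by ring
    _ = ∑ d ∈ n.divisors, 1 / (Nat.totient d : ℝ) :=
        Nat.sum_div_divisors n (fun d => 1 / (Nat.totient d : ℝ))

/-- Swapping a divisor sum over an interval. -/
lemma swap_divisor_sum (N : ℕ) (f : ℕ → ℝ) :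
    ∑ n ∈ Ioc 0 N, ∑ d ∈ n.divisors, f d
      = ∑ d ∈ Ioc 0 N, ((N / d : ℕ) : ℝ) * f d := by
  have hdiv : ∀ n ∈ Ioc 0 N, n.divisors = (Ioc 0 N).filter (· ∣ n) := by
    intro n hn
    rw [Finset.mem_Ioc] at hn
    ext d
    simp only [Nat.mem_divisors, Finset.mem_filter, Finset.mem_Ioc]
    constructor
    · rintro ⟨hd, -⟩
      exact ⟨⟨Nat.pos_of_dvd_of_pos hd hn.1, le_trans (Nat.le_of_dvd hn.1 hd) hn.2⟩, hd⟩
    · rintro ⟨-, hd⟩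
      exact ⟨hd, hn.1.ne'⟩
  calc ∑ n ∈ Ioc 0 N, ∑ d ∈ n.divisors, f d
      = ∑ n ∈ Ioc 0 N, ∑ d ∈ Ioc 0 N, if d ∣ n then f d else 0 := by
        apply Finset.sum_congr rfl
        intro n hn
        rw [hdiv n hn, Finset.sum_filter]
    _ = ∑ d ∈ Ioc 0 N, ∑ n ∈ Ioc 0 N, if d ∣ n then f d else 0 := Finset.sum_comm
    _ = ∑ d ∈ Ioc 0 N, ((N / d : ℕ) : ℝ) * f d := by
        apply Finset.sum_congr rfl
        intro d _
        rw [← Finset.sum_filter]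
        rw [Finset.sum_const]
        rw [Nat.Ioc_filter_dvd_card_eq_div]
        simp [nsmul_eq_mul]

/-- 1/φ(d) ≤ τ(d)/d. -/
lemma one_div_totient_le (d : ℕ) (hd : 0 < d) :
    (1 : ℝ) / (Nat.totient d : ℝ) ≤ (d.divisors.card : ℝ) / (d : ℝ) := by
  have h1 := div_totient_le_sum d
  have h2 : ∑ e ∈ d.divisors, 1 / (Nat.totient e : ℝ) ≤ (d.divisors.card : ℝ) := by
    calc ∑ e ∈ d.divisors, 1 / (Nat.totient e : ℝ) ≤ ∑ e ∈ d.divisors, 1 := by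
          apply Finset.sum_le_sum
          intro e he
          have : 0 < Nat.totient e :=
            Nat.totient_pos.mpr (Nat.pos_of_mem_divisors he)
          rw [div_le_one (by exact_mod_cast this)]
          exact_mod_cast this
      _ = (d.divisors.card : ℝ) := by simp
  have hd' : (0:ℝ) < d := by exact_mod_cast hd
  have hφ : (0:ℝ) < (Nat.totient d : ℝ) := by exact_mod_cast Nat.totient_pos.mpr hd
  have h3 : (d : ℝ) / (Nat.totient d : ℝ) ≤ (d.divisors.card : ℝ) := le_trans h1 h2
  rw [div_le_iff₀ hφ] at h3
  rw [div_le_div_iff₀ hφ hd']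
  nlinarith

/-- Sum of τ(d)/d² is bounded by 4. -/
lemma sum_tau_div_sq_le (N : ℕ) :
    ∑ d ∈ Ioc 0 N, (d.divisors.card : ℝ) / (d : ℝ) ^ 2 ≤ 4 := by
  have key : ∑ d ∈ Ioc 0 N, (d.divisors.card : ℝ) / (d : ℝ) ^ 2
      = ∑ e ∈ Ioc 0 N, ∑ d ∈ (Ioc 0 N).filter (e ∣ ·), (1 : ℝ) / (d : ℝ) ^ 2 := by
    have : ∀ d ∈ Ioc 0 N, (d.divisors.card : ℝ) / (d : ℝ) ^ 2
        = ∑ e ∈ Ioc 0 N, if e ∣ d then (1:ℝ) / (d : ℝ) ^ 2 else 0 := by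
      intro d hd
      rw [Finset.mem_Ioc] at hd
      rw [← Finset.sum_filter, Finset.sum_const]
      have : (Ioc 0 N).filter (· ∣ d) = d.divisors := by
        ext e
        simp only [Nat.mem_divisors, Finset.mem_filter, Finset.mem_Ioc]
        constructor
        · rintro ⟨-, he⟩; exact ⟨he, hd.1.ne'⟩
        · rintro ⟨he, -⟩
          exact ⟨⟨Nat.pos_of_dvd_of_pos he hd.1, le_trans (Nat.le_of_dvd hd.1 he) hd.2⟩, he⟩
      rw [this, nsmul_eq_mul, mul_one_div]
    rw [Finset.sum_congr rfl this, Finset.sum_comm]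
    apply Finset.sum_congr rfl
    intro e _
    rw [← Finset.sum_filter]
  rw [key]
  calc ∑ e ∈ Ioc 0 N, ∑ d ∈ (Ioc 0 N).filter (e ∣ ·), (1 : ℝ) / (d : ℝ) ^ 2
      ≤ ∑ e ∈ Ioc 0 N, 2 / (e : ℝ) ^ 2 := by
        apply Finset.sum_le_sum
        intro e he
        rw [Finset.mem_Ioc] at he
        have he0 : 0 < e := he.1
        have himg : (Ioc 0 N).filter (e ∣ ·) = (Ioc 0 (N / e)).image (e * ·) := by
          ext d
          simp only [Finset.mem_filter, Finset.mem_Ioc, Finset.mem_image]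
          constructor
          · rintro ⟨⟨hd0, hdN⟩, m, rfl⟩
            have hm0 : 0 < m := by
              rcases Nat.eq_zero_or_pos m with rfl | h
              · simp at hd0
              · exact h
            exact ⟨m, ⟨hm0, (Nat.le_div_iff_mul_le he0).mpr (by rwa [Nat.mul_comm])⟩, rfl⟩
          · rintro ⟨m, ⟨hm0, hmN⟩, rfl⟩
            have : m * e ≤ N := (Nat.le_div_iff_mul_le he0).mp hmN
            exact ⟨⟨Nat.mul_pos he0 hm0, by rwa [Nat.mul_comm]⟩, dvd_mul_right e m⟩
        rw [himg, Finset.sum_image (by intro a _ b _ h; exact Nat.eq_of_mul_eq_mul_left he0 h)]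
        have : ∀ m ∈ Ioc 0 (N / e), (1 : ℝ) / ((e * m : ℕ) : ℝ) ^ 2
            = (1 / (e : ℝ) ^ 2) * (1 / (m : ℝ) ^ 2) := by
          intro m hm
          rw [Finset.mem_Ioc] at hm
          have : ((e * m : ℕ) : ℝ) = (e : ℝ) * (m : ℝ) := by push_cast; ring
          rw [this, mul_pow]
          have h1 : ((e : ℝ)) ≠ 0 := by exact_mod_cast he0.ne'
          have h2 : ((m : ℝ)) ≠ 0 := by exact_mod_cast hm.1.ne'
          field_simp
        rw [Finset.sum_congr rfl this, ← Finset.mul_sum]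
        have hb := basel_bound' (N / e)
        have hpos : (0:ℝ) ≤ 1 / (e : ℝ) ^ 2 := by positivity
        calc (1 / (e : ℝ) ^ 2) * ∑ m ∈ Ioc 0 (N / e), 1 / (m : ℝ) ^ 2
            ≤ (1 / (e : ℝ) ^ 2) * 2 := by exact mul_le_mul_of_nonneg_left hb hpos
          _ = 2 / (e : ℝ) ^ 2 := by ring
    _ = 2 * ∑ e ∈ Ioc 0 N, 1 / (e : ℝ) ^ 2 := by
        rw [Finset.mul_sum]; apply Finset.sum_congr rfl; intros; ring
    _ ≤ 2 * 2 := by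
        have := basel_bound' N
        linarith
    _ = 4 := by norm_num

theorem sum_div_totient_le :
    ∃ C : ℝ, 0 < C ∧ ∀ x : ℝ, 1 ≤ x →
      ∑ n ∈ Finset.Icc 1 ⌊x⌋₊, (n : ℝ) / (Nat.totient n : ℝ) ≤ C * x := by
  refine ⟨4, by norm_num, fun x hx => ?_⟩
  set N := ⌊x⌋₊ with hN
  have hIcc : Finset.Icc 1 N = Ioc 0 N := by
    ext n; simp [Finset.mem_Icc, Finset.mem_Ioc, Nat.lt_iff_add_one_le]
  rw [hIcc]
  have hNx : (N : ℝ) ≤ x := Nat.floor_le (by linarith)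
  calc ∑ n ∈ Ioc 0 N, (n : ℝ) / (Nat.totient n : ℝ)
      ≤ ∑ n ∈ Ioc 0 N, ∑ d ∈ n.divisors, 1 / (Nat.totient d : ℝ) :=
        Finset.sum_le_sum fun n _ => div_totient_le_sum n
    _ = ∑ d ∈ Ioc 0 N, ((N / d : ℕ) : ℝ) * (1 / (Nat.totient d : ℝ)) :=
        swap_divisor_sum N _
    _ ≤ ∑ d ∈ Ioc 0 N, (N : ℝ) * ((d.divisors.card : ℝ) / (d : ℝ) ^ 2) := by
        apply Finset.sum_le_sum
        intro d hd
        rw [Finset.mem_Ioc] at hd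
        have hd0 : 0 < d := hd.1
        have h1 : ((N / d : ℕ) : ℝ) ≤ (N : ℝ) / (d : ℝ) := Nat.cast_div_le
        have h2 := one_div_totient_le d hd0
        have hd' : ((d:ℝ)) ≠ 0 := by exact_mod_cast hd0.ne'
        calc ((N / d : ℕ) : ℝ) * (1 / (Nat.totient d : ℝ))
            ≤ ((N : ℝ) / (d : ℝ)) * ((d.divisors.card : ℝ) / (d : ℝ)) := by
              apply mul_le_mul h1 h2 (by positivity) (by positivity)
          _ = (N : ℝ) * ((d.divisors.card : ℝ) / (d : ℝ) ^ 2) := by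
              rw [div_mul_div_comm, ← sq, mul_div_assoc]
    _ = (N : ℝ) * ∑ d ∈ Ioc 0 N, (d.divisors.card : ℝ) / (d : ℝ) ^ 2 := by
        rw [Finset.mul_sum]
    _ ≤ (N : ℝ) * 4 := by
        apply mul_le_mul_of_nonneg_left (sum_tau_div_sq_le N) (by positivity)
    _ ≤ 4 * x := by nlinarith
end

section
/- Suppose k, k' are positive integers with k·ω(k) = k'·ω(k'), let d = gcd(k,k') and t = gcd(ω(k), ω(k')). Then k = d·ω(k')/t and k' = d·ω(k)/t; in particular ω(k) ≤ ω(d) + ω(ω(k')/t) ≤ ω(k') + ω(ω(k')). -/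
theorem omega_eq_structure (k k' : ℕ) (hk : 2 ≤ k) (hk' : 2 ≤ k')
    (h : k * k.primeFactors.card = k' * k'.primeFactors.card) :
    k = Nat.gcd k k' * (k'.primeFactors.card / Nat.gcd k.primeFactors.card k'.primeFactors.card) ∧
    k' = Nat.gcd k k' * (k.primeFactors.card / Nat.gcd k.primeFactors.card k'.primeFactors.card) ∧
    k.primeFactors.card ≤ (Nat.gcd k k').primeFactors.card +
      (k'.primeFactors.card / Nat.gcd k.primeFactors.card k'.primeFactors.card).primeFactors.card ∧
    (Nat.gcd k k').primeFactors.card +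
      (k'.primeFactors.card / Nat.gcd k.primeFactors.card k'.primeFactors.card).primeFactors.card
      ≤ k'.primeFactors.card + (k'.primeFactors.card).primeFactors.card := by
  set a := k.primeFactors.card with ha_def
  set b := k'.primeFactors.card with hb_def
  have hk0 : k ≠ 0 := by omega
  have hk'0 : k' ≠ 0 := by omega
  have hapos : 0 < a := Finset.card_pos.mpr (Nat.nonempty_primeFactors.mpr hk)
  have hbpos : 0 < b := Finset.card_pos.mpr (Nat.nonempty_primeFactors.mpr hk')
  set d := Nat.gcd k k' with hd_def
  set t := Nat.gcd a b with ht_def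
  have hd0 : 0 < d := Nat.gcd_pos_of_pos_left _ (by omega)
  have ht0 : 0 < t := Nat.gcd_pos_of_pos_left _ hapos
  set m := k / d with hm_def
  set n := k' / d with hn_def
  have hkm : d * m = k := Nat.mul_div_cancel' (Nat.gcd_dvd_left k k')
  have hkn : d * n = k' := Nat.mul_div_cancel' (Nat.gcd_dvd_right k k')
  have hmn : Nat.Coprime m n := Nat.coprime_div_gcd_div_gcd hd0
  have hat : t * (a / t) = a := Nat.mul_div_cancel' (Nat.gcd_dvd_left a b)
  have hbt : t * (b / t) = b := Nat.mul_div_cancel' (Nat.gcd_dvd_right a b)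
  have hab : Nat.Coprime (a / t) (b / t) := Nat.coprime_div_gcd_div_gcd ht0
  -- m * a = n * b
  have h1 : m * a = n * b := by
    have : d * (m * a) = d * (n * b) := by
      rw [← mul_assoc, ← mul_assoc, hkm, hkn]; exact h
    exact Nat.eq_of_mul_eq_mul_left hd0 this
  have h2 : m * (a / t) = n * (b / t) := by
    have : t * (m * (a / t)) = t * (n * (b / t)) := by
      rw [mul_left_comm, hat, mul_left_comm, hbt]; exact h1
    exact Nat.eq_of_mul_eq_mul_left ht0 this
  have hm_eq : m = b / t := by
    apply Nat.dvd_antisymm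
    · exact hmn.dvd_of_dvd_mul_right ⟨a / t, by rw [mul_comm]; exact h2.symm⟩
    · exact (hab.symm).dvd_of_dvd_mul_right ⟨n, by rw [h2, mul_comm]⟩
  have hn_eq : n = a / t := by
    apply Nat.dvd_antisymm
    · exact hmn.symm.dvd_of_dvd_mul_right ⟨b / t, by rw [mul_comm]; exact h2⟩
    · exact hab.dvd_of_dvd_mul_right ⟨m, by rw [← h2, mul_comm]⟩
  have goal1 : k = d * (b / t) := by rw [← hm_eq, hkm]
  have goal2 : k' = d * (a / t) := by rw [← hn_eq, hkn]
  have hbt0 : b / t ≠ 0 := by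
    intro h0
    rw [h0, mul_zero] at goal1; exact hk0 goal1
  refine ⟨goal1, goal2, ?_, ?_⟩
  · have : k.primeFactors = (d * (b / t)).primeFactors := by rw [← goal1]
    rw [ha_def, this, Nat.primeFactors_mul (hd0.ne') hbt0]
    exact Finset.card_union_le _ _
  · have hle1 : d.primeFactors.card ≤ b :=
      Finset.card_le_card (Nat.primeFactors_mono (Nat.gcd_dvd_right k k') hk'0)
    have hle2 : (b / t).primeFactors.card ≤ b.primeFactors.card :=
      Finset.card_le_card (Nat.primeFactors_mono (Nat.div_dvd_of_dvd (Nat.gcd_dvd_right a b))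
        (by omega))
    omega
end

section
/- The infinite product G(1/2) = ∏_p (1 + 1/(p(p−1+√(p²−p)))) over all primes p converges to a real number in the interval (1.36, 1.37). -/
/-!
Write the factors as `1 + a p`. Since `√(p² - p) ≥ p - 1`, we have `0 < a p ≤ 1 / (2p(p - 1))`,
so the product converges and dominates each of its partial products. For the primes below 71,
`√(p² - p)` is bracketed by rational functions of `p`, which pins their product inside
`(1.36, 1.365)`. The remaining primes are odd and at least 71, where
`a p ≤ 1/(4(p - 2)) - 1/(4p)` telescopes along odd numbers to a tail sum of at most `1/276`;
by `∏ (1 + a p) ≤ exp (∑ a p)` the tail factor is at most `exp (1/276) < 1.37 / 1.365`.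
-/

open Finset Real

namespace Real

variable {ι : Type*} {a : ι → ℝ} {L : ℝ}

theorem prod_one_add_le_of_hasProd (ha : ∀ i, 0 ≤ a i) (h : HasProd (fun i ↦ 1 + a i) L)
    (s : Finset ι) : ∏ i ∈ s, (1 + a i) ≤ L :=
  ge_of_tendsto h <| Filter.eventually_atTop.2 ⟨s, fun _ hst ↦
    prod_le_prod_of_subset_of_one_le hst (fun i _ ↦ by linarith [ha i])
      (fun i _ _ ↦ by linarith [ha i])⟩

theorem le_prod_one_add_mul_exp_of_hasProd (ha : ∀ i, 0 ≤ a i)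
    (h : HasProd (fun i ↦ 1 + a i) L) (s : Finset ι) {c : ℝ}
    (hc : ∀ t, Disjoint s t → ∑ i ∈ t, a i ≤ c) : L ≤ (∏ i ∈ s, (1 + a i)) * exp c := by
  classical
  have h1 : ∀ i, 0 ≤ 1 + a i := fun i ↦ by linarith [ha i]
  refine hasProd_le_of_prod_le h fun t ↦ ?_
  rw [← prod_inter_mul_prod_sdiff t s]
  refine mul_le_mul ?_ ?_ (prod_nonneg fun i _ ↦ h1 i) (prod_nonneg fun i _ ↦ h1 i)
  · exact prod_le_prod_of_subset_of_one_le inter_subset_right (fun i _ ↦ h1 i)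
      (fun i _ _ ↦ by linarith [ha i])
  · exact (prod_one_add_le_exp_sum _ ha).trans
      (exp_le_exp.2 (hc _ disjoint_sdiff))

end Real

theorem Finset.sum_sub_succ_le_of_antitone {u : ℕ → ℝ} (hu : Antitone u) (hu0 : ∀ n, 0 ≤ u n)
    (T : Finset ℕ) : ∑ k ∈ T, (u k - u (k + 1)) ≤ u 0 := by
  obtain ⟨N, hN⟩ := exists_nat_subset_range T
  calc ∑ k ∈ T, (u k - u (k + 1)) ≤ ∑ k ∈ range N, (u k - u (k + 1)) :=
        sum_le_sum_of_subset_of_nonneg hN fun k _ _ ↦ sub_nonneg.2 (hu k.le_succ)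
    _ = u 0 - u N := sum_range_sub' u N
    _ ≤ u 0 := sub_le_self _ (hu0 N)

def Nat.Primes.below (N : ℕ) : Finset Nat.Primes := (range N).subtype Nat.Prime

theorem Nat.Primes.mem_below {N : ℕ} {p : Nat.Primes} : p ∈ Nat.Primes.below N ↔ (p : ℕ) < N :=
  mem_subtype.trans mem_range

theorem Nat.Primes.prod_below {M : Type*} [CommMonoid M] (N : ℕ) (f : ℕ → M) :
    ∏ p ∈ Nat.Primes.below N, f p = ∏ n ∈ N.primesBelow, f n :=
  prod_subtype_eq_prod_filter f

noncomputable def gHalfTerm (n : ℕ) : ℝ := 1 / (n * (n - 1 + √(n ^ 2 - n)))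

section gHalfTerm

variable {n : ℕ}

theorem gHalfTerm_le_of_le_sqrt (hn : 1 ≤ n) {r : ℝ} (hr : 0 < n - 1 + r)
    (h : r ≤ √((n : ℝ) ^ 2 - n)) : gHalfTerm n ≤ 1 / (n * (n - 1 + r)) := by
  have hn' : (1 : ℝ) ≤ n := by exact_mod_cast hn
  unfold gHalfTerm
  gcongr

theorem le_gHalfTerm_of_sqrt_le (hn : 2 ≤ n) {r : ℝ} (h : √((n : ℝ) ^ 2 - n) ≤ r) :
    1 / (n * (n - 1 + r)) ≤ gHalfTerm n := by
  have hn' : (2 : ℝ) ≤ n := by exact_mod_cast hn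
  unfold gHalfTerm
  gcongr
  nlinarith [sqrt_nonneg ((n : ℝ) ^ 2 - n)]

theorem gHalfTerm_pos (hn : 2 ≤ n) : 0 < gHalfTerm n := by
  have hn' : (2 : ℝ) ≤ n := by exact_mod_cast hn
  unfold gHalfTerm
  have := sqrt_nonneg ((n : ℝ) ^ 2 - n)
  have : (0 : ℝ) < n - 1 + √((n : ℝ) ^ 2 - n) := by linarith
  positivity

theorem gHalfTerm_le (hn : 2 ≤ n) : gHalfTerm n ≤ 1 / (2 * n * (n - 1)) := by
  have hn' : (2 : ℝ) ≤ n := by exact_mod_cast hn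
  have h := gHalfTerm_le_of_le_sqrt (n := n) (by omega) (r := n - 1) (by linarith)
    (le_sqrt_of_sq_le (by nlinarith))
  convert h using 2
  ring

theorem gHalfTerm_le_sub (hn : 3 ≤ n) : gHalfTerm n ≤ 1 / (4 * (n - 2)) - 1 / (4 * n) := by
  have hn' : (3 : ℝ) ≤ n := by exact_mod_cast hn
  calc gHalfTerm n ≤ 1 / (2 * n * (n - 1)) := gHalfTerm_le (by omega)
    _ ≤ 1 / (2 * n * (n - 2)) := by gcongr <;> nlinarith
    _ = 1 / (4 * (n - 2)) - 1 / (4 * n) := by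
      have : (n : ℝ) - 2 ≠ 0 := by linarith
      field_simp
      ring

end gHalfTerm

theorem summable_gHalfTerm_primes : Summable fun p : Nat.Primes ↦ gHalfTerm p := by
  refine .of_nonneg_of_le (fun p ↦ (gHalfTerm_pos p.2.two_le).le) (fun p ↦ ?_)
    ((summable_one_div_nat_pow.2 one_lt_two).comp_injective Nat.Primes.coe_nat_injective)
  have hp : (2 : ℝ) ≤ (p : ℕ) := by exact_mod_cast p.2.two_le
  exact (gHalfTerm_le p.2.two_le).trans (one_div_le_one_div_of_le (by positivity) (by nlinarith))

theorem sum_gHalfTerm_le_of_odd {N : ℕ} (hN : 1 ≤ N) (T : Finset ℕ)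
    (hT : ∀ n ∈ T, Odd n ∧ 2 * N + 1 ≤ n) :
    ∑ n ∈ T, gHalfTerm n ≤ 1 / (4 * (2 * N - 1)) := by
  have hpos : ∀ k : ℕ, 0 < 4 * (2 * ((N : ℝ) + k) - 1) := fun k ↦ by
    have : (1 : ℝ) ≤ N := by exact_mod_cast hN
    have : (0 : ℝ) ≤ k := k.cast_nonneg
    linarith
  set u : ℕ → ℝ := fun k ↦ 1 / (4 * (2 * (N + k) - 1)) with hu
  have hu_anti : Antitone u := fun k l hkl ↦ by
    have : (k : ℝ) ≤ l := by exact_mod_cast hkl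
    exact one_div_le_one_div_of_le (hpos k) (by linarith)
  have hu_nonneg : ∀ k, 0 ≤ u k := fun k ↦ (one_div_pos.2 (hpos k)).le
  have he : ∀ n ∈ T, n = 2 * (N + (n / 2 - N)) + 1 := fun n hn ↦ by
    obtain ⟨⟨m, rfl⟩, hle⟩ := hT n hn
    omega
  have hterm : ∀ n ∈ T, gHalfTerm n ≤ u (n / 2 - N) - u (n / 2 - N + 1) := fun n hn ↦ by
    have hn' : (n : ℝ) = 2 * (N + (n / 2 - N : ℕ)) + 1 := by exact_mod_cast he n hn
    refine (gHalfTerm_le_sub (by have := (hT n hn).2; omega)).trans_eq ?_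
    rw [hu, hn']
    push_cast
    ring_nf
  calc ∑ n ∈ T, gHalfTerm n ≤ ∑ n ∈ T, (u (n / 2 - N) - u (n / 2 - N + 1)) := sum_le_sum hterm
    _ = ∑ k ∈ T.image (· / 2 - N), (u k - u (k + 1)) := by
        refine (sum_image (f := fun k ↦ u k - u (k + 1)) fun m hm n hn hmn ↦ ?_).symm
        rw [he m hm, he n hn, hmn]
    _ ≤ u 0 := sum_sub_succ_le_of_antitone hu_anti hu_nonneg _
    _ = 1 / (4 * (2 * N - 1)) := by simp [hu]

theorem sum_gHalfTerm_primes_le {N : ℕ} (hN : 1 ≤ N) (t : Finset Nat.Primes)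
    (ht : Disjoint (Nat.Primes.below (2 * N + 1)) t) :
    ∑ p ∈ t, gHalfTerm p ≤ 1 / (4 * (2 * N - 1)) := by
  refine (sum_map t (.subtype _) gHalfTerm).symm.trans_le
    (sum_gHalfTerm_le_of_odd hN _ fun n hn ↦ ?_)
  obtain ⟨p, hp, rfl⟩ := mem_map.1 hn
  have hle : 2 * N + 1 ≤ (p : ℕ) :=
    not_lt.1 fun h ↦ disjoint_left.1 ht (Nat.Primes.mem_below.2 h) hp
  exact ⟨p.2.odd_of_ne_two (by simp; omega), hle⟩

/- With `m = 2x - 1`, `√(x² - x) = √(m² - 1) / 2 = m/2 - 1/(4m) - 1/(16m³) - ⋯`; the two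
brackets below are this expansion truncated after two terms, and after three terms with the
last coefficient doubled. -/
theorem sqrt_sq_sub_self_le {x : ℝ} (hx : 1 ≤ x) : √(x ^ 2 - x) ≤ x - 1 / 2 - 1 / (8 * x - 4) := by
  set y := 1 / (8 * x - 4)
  have hy : y * (8 * x - 4) = 1 := one_div_mul_cancel (by linarith)
  have hy4 : y ≤ 1 / 4 := one_div_le_one_div_of_le (by norm_num) (by linarith)
  rw [sqrt_le_iff]
  exact ⟨by linarith, by nlinarith [sq_nonneg y]⟩

theorem le_sqrt_sq_sub_self {x : ℝ} (hx : 2 ≤ x) :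
    x - 1 / 2 - 1 / (8 * x - 4) - 1 / (8 * (2 * x - 1) ^ 3) ≤ √(x ^ 2 - x) := by
  obtain ⟨m, hm, rfl⟩ : ∃ m, 3 ≤ m ∧ x = (m + 1) / 2 := ⟨2 * x - 1, by linarith, by ring⟩
  have hm0 : m ≠ 0 := by positivity
  have key : ((m + 1) / 2) ^ 2 - (m + 1) / 2 -
      ((m + 1) / 2 - 1 / 2 - 1 / (8 * ((m + 1) / 2) - 4) - 1 / (8 * (2 * ((m + 1) / 2) - 1) ^ 3)) ^ 2
      = (4 * m ^ 2 * (m ^ 2 - 1) - 1) / (64 * m ^ 6) := by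
    rw [show 8 * ((m + 1) / 2) - 4 = 4 * m by ring, show 2 * ((m + 1) / 2) - 1 = m by ring]
    field_simp
    ring
  refine le_sqrt_of_sq_le (sub_nonneg.1 (key ▸ div_nonneg ?_ (by positivity)))
  have : 9 * 8 ≤ m ^ 2 * (m ^ 2 - 1) := by gcongr <;> nlinarith
  linarith

theorem lt_prod_one_add_gHalfTerm_primesBelow_71 :
    (1.36 : ℝ) < ∏ n ∈ Nat.primesBelow 71, (1 + gHalfTerm n) := by
  calc (1.36 : ℝ)
    _ < ∏ n ∈ Nat.primesBelow 71, (1 + 1 / (n * (n - 1 + (n - 1 / 2 - 1 / (8 * n - 4)))) : ℝ) := by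
      simp only [Nat.primesBelow, prod_filter, prod_range_succ, prod_range_zero]
      norm_num
    _ ≤ ∏ n ∈ Nat.primesBelow 71, (1 + gHalfTerm n) := by
      refine prod_le_prod (fun n hn ↦ ?_) fun n hn ↦ ?_
      all_goals have hn2 := (Nat.prime_of_mem_primesBelow hn).two_le
      all_goals have hn1 : (1 : ℝ) ≤ n := by exact_mod_cast hn2.trans' one_le_two
      · have := (sqrt_nonneg _).trans (sqrt_sq_sub_self_le hn1)
        exact add_nonneg zero_le_one (one_div_nonneg.2 (mul_nonneg (by linarith) (by linarith)))
      · exact add_le_add le_rfl (le_gHalfTerm_of_sqrt_le hn2 (sqrt_sq_sub_self_le hn1))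

theorem prod_one_add_gHalfTerm_primesBelow_71_lt :
    ∏ n ∈ Nat.primesBelow 71, (1 + gHalfTerm n) < 1.365 := by
  calc ∏ n ∈ Nat.primesBelow 71, (1 + gHalfTerm n)
    _ ≤ ∏ n ∈ Nat.primesBelow 71, (1 + 1 / (n * (n - 1 + (n - 1 / 2 - 1 / (8 * n - 4)
          - 1 / (8 * (2 * n - 1) ^ 3)))) : ℝ) := by
      refine prod_le_prod (fun n hn ↦ ?_) fun n hn ↦ ?_
      all_goals have hn2 := (Nat.prime_of_mem_primesBelow hn).two_le
      · linarith [gHalfTerm_pos hn2]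
      have hn : (2 : ℝ) ≤ n := by exact_mod_cast hn2
      have h1 : 1 / (8 * (n : ℝ) - 4) ≤ 1 / 4 :=
        one_div_le_one_div_of_le (by norm_num) (by linarith)
      have h2 : 1 / (8 * (2 * (n : ℝ) - 1) ^ 3) ≤ 1 / 8 :=
        one_div_le_one_div_of_le (by norm_num)
          (by nlinarith [one_le_pow₀ (n := 3) (by linarith : (1 : ℝ) ≤ 2 * n - 1)])
      exact add_le_add le_rfl
        (gHalfTerm_le_of_le_sqrt (by omega) (by linarith) (le_sqrt_sq_sub_self hn))
    _ < 1.365 := by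
      simp only [Nat.primesBelow, prod_filter, prod_range_succ, prod_range_zero]
      norm_num

theorem G_half_value :
    ∃ L : ℝ, HasProd (fun p : Nat.Primes =>
        1 + 1 / ((p : ℕ) * ((p : ℕ) - 1 + Real.sqrt ((p : ℕ) ^ 2 - (p : ℕ))))) L ∧
      L ∈ Set.Ioo (1.36 : ℝ) 1.37 := by
  have ha : ∀ p : Nat.Primes, 0 ≤ gHalfTerm p := fun p ↦ (gHalfTerm_pos p.2.two_le).le
  have h := (Real.multipliable_one_add_of_summable summable_gHalfTerm_primes).hasProd
  have hprod := Nat.Primes.prod_below 71 fun n ↦ 1 + gHalfTerm n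
  refine ⟨_, h, ?_, ?_⟩
  · calc (1.36 : ℝ) < ∏ p ∈ Nat.Primes.below 71, (1 + gHalfTerm p) :=
          hprod ▸ lt_prod_one_add_gHalfTerm_primesBelow_71
      _ ≤ _ := prod_one_add_le_of_hasProd ha h _
  calc _ ≤ (∏ p ∈ Nat.Primes.below 71, (1 + gHalfTerm p)) * exp (1 / 276) :=
        le_prod_one_add_mul_exp_of_hasProd ha h _ fun t ht ↦
          (sum_gHalfTerm_primes_le (N := 35) (by norm_num) t ht).trans_eq (by norm_num)
    _ ≤ 1.365 * (1 / (1 - 1 / 276)) :=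
        mul_le_mul (hprod ▸ prod_one_add_gHalfTerm_primesBelow_71_lt).le
          (exp_bound_div_one_sub_of_interval (by norm_num) (by norm_num)) (exp_pos _).le
          (by norm_num)
    _ < 1.37 := by norm_num
end

section
/- If n = k·φ(k) for a positive integer k > 1, and p is the largest prime factor of n, then p is also the largest prime factor of k, and if p^α ∥ k (i.e., p^α exactly divides k), then p^{2α−1} ∥ n. -/
lemma prime_dvd_totient_aux {r m : ℕ} (hr : r.Prime) (hm : m ≠ 0)
    (h : r ∣ Nat.totient m) :
    ∃ q : ℕ, q.Prime ∧ q ∣ m ∧ (r = q ∨ r ∣ q - 1) := by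
  rw [Nat.totient_eq_prod_factorization hm, Finsupp.prod] at h
  obtain ⟨q, hq, hdvd⟩ := hr.prime.exists_mem_finset_dvd h
  have hqmem : q ∈ m.primeFactors := by
    simpa [Nat.support_factorization] using hq
  have hqp : q.Prime := Nat.prime_of_mem_primeFactors hqmem
  refine ⟨q, hqp, Nat.dvd_of_mem_primeFactors hqmem, ?_⟩
  rcases hr.prime.dvd_mul.mp hdvd with h1 | h2
  · exact Or.inl ((Nat.prime_dvd_prime_iff_eq hr hqp).mp (hr.dvd_of_dvd_pow h1))
  · exact Or.inr h2

theorem largest_prime_factor_structure (k n p : ℕ) (hk : 1 < k)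
    (hn : n = k * Nat.totient k) (hp : p.Prime) (hpn : p ∣ n)
    (hmax : ∀ q : ℕ, q.Prime → q ∣ n → q ≤ p) :
    p ∣ k ∧ (∀ q : ℕ, q.Prime → q ∣ k → q ≤ p) ∧
    n.factorization p = 2 * k.factorization p - 1 := by
  have hk0 : k ≠ 0 := by omega
  have hkn : k ∣ n := hn ▸ Dvd.intro _ rfl
  -- largest-prime bound transfers to k
  have hmaxk : ∀ q : ℕ, q.Prime → q ∣ k → q ≤ p := fun q hq hqk =>
    hmax q hq (hqk.trans hkn)
  -- p divides k
  have hpk : p ∣ k := by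
    rcases hp.prime.dvd_mul.mp (hn ▸ hpn) with h | h
    · exact h
    · obtain ⟨q, hqp, hqk, hcase⟩ := prime_dvd_totient_aux hp hk0 h
      rcases hcase with rfl | hd
      · exact hqk
      · have hq2 := hqp.two_le
        have : p ≤ q - 1 := Nat.le_of_dvd (by omega) hd
        have : q ≤ p := hmaxk q hqp hqk
        omega
  refine ⟨hpk, hmaxk, ?_⟩
  set α := k.factorization p with hα
  have hαpos : 0 < α := hp.factorization_pos_of_dvd hk0 hpk
  -- split k = p^α * m
  set m := k / p ^ α with hm
  have hkeq : p ^ α * m = k := Nat.ordProj_mul_ordCompl_eq_self k p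
  have hmpos : 0 < m := Nat.ordCompl_pos p hk0
  have hm0 : m ≠ 0 := hmpos.ne'
  have hpm : ¬ p ∣ m := Nat.not_dvd_ordCompl hp hk0
  have hcop : Nat.Coprime (p ^ α) m :=
    Nat.Coprime.pow_left α (Nat.coprime_ordCompl hp hk0)
  -- p does not divide φ(m)
  have hpφm : ¬ p ∣ Nat.totient m := by
    intro h
    obtain ⟨q, hqp, hqm, hcase⟩ := prime_dvd_totient_aux hp hm0 h
    have hqk : q ∣ k := hqm.trans (hkeq ▸ Dvd.intro_left _ rfl)
    rcases hcase with rfl | hd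
    · exact hpm hqm
    · have hq2 := hqp.two_le
      have : p ≤ q - 1 := Nat.le_of_dvd (by omega) hd
      have : q ≤ p := hmaxk q hqp hqk
      omega
  -- φ(k) = p^(α-1) * (p-1) * φ(m)
  have hφk : Nat.totient k = p ^ (α - 1) * (p - 1) * Nat.totient m := by
    rw [← hkeq, Nat.totient_mul hcop, Nat.totient_prime_pow hp hαpos]
  have hφk0 : Nat.totient k ≠ 0 := (Nat.totient_pos.mpr (by omega)).ne'
  -- factorization of φ(k) at p is α - 1
  have hpp1 : ¬ p ∣ (p - 1) := by
    have := hp.two_le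
    intro h
    have := Nat.le_of_dvd (by omega) h
    omega
  have hφfact : (Nat.totient k).factorization p = α - 1 := by
    have h1 : p ^ (α - 1) ≠ 0 := pow_ne_zero _ hp.pos.ne'
    have h2 : p - 1 ≠ 0 := by have := hp.two_le; omega
    rw [hφk, Nat.factorization_mul (mul_ne_zero h1 h2) (Nat.totient_pos.mpr hmpos).ne',
      Nat.factorization_mul h1 h2, Nat.Prime.factorization_pow hp]
    simp [Nat.factorization_eq_zero_of_not_dvd hpp1,
      Nat.factorization_eq_zero_of_not_dvd hpφm]
  have hnfact : n.factorization p = α + (α - 1) := by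
    rw [hn, Nat.factorization_mul hk0 hφk0]
    simp [hφfact, hα]
  omega
end
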